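/- Let M be an n-dimensional quasi-Einstein hypersurface isometrically immersed into an (n+1)-dimensional Riemannian manifold (M̃,g̃), whose Ricci tensor has the form Ric = α g + β η⊗η, let V be a concircular vector field on M̃ (∇̃_X V = a X), let η be the g-dual 1-form of the tangential component V^T, and assume ρ = g̃(N, V^⊥) is nowhere zero, where N is the unit normal of M. Then (M,g) is an almost η-Ricci soliton (V^T,λ,μ) if and only if M is a quasi-umbilical hypersurface whose second fundamental tensor satisfies H = ((λ − a − α)/ρ) g + ((μ − β)/ρ) η⊗η. -/

import Mathlib

/-!
Abstract model of the geometric data of an `n`-dimensional Riemannian manifold: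
`M` is the set of points, `VF` is the space of (smooth) vector fields, and smooth
real-valued functions on `M` are modelled as elements of `M → ℝ`.  The structure
records the metric, the directional derivative, the Lie bracket, the Levi-Civita
connection, the Ricci tensor, the scalar curvature and a pointwise orthonormal
frame, together with their standard defining properties.
-/
structure RiemannianSetting (n : ℕ) (M : Type) (VF : Type)
    [AddCommGroup VF] [Module ℝ VF] : Type where
  /-- multiplication of a vector field by a smooth function -/
  fsmul : (M → ℝ) → VF → VF
  /-- derivative of a function in the direction of a vector field -/
  dd : VF → (M → ℝ) → M → ℝ
  /-- the Riemannian metric -/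
  g : VF → VF → M → ℝ
  /-- the Lie bracket of vector fields -/
  bracket : VF → VF → VF
  /-- the Levi-Civita connection -/
  conn : VF → VF → VF
  /-- the Ricci curvature tensor field -/
  ric : VF → VF → M → ℝ
  /-- the scalar curvature -/
  scal : M → ℝ
  /-- a pointwise orthonormal frame -/
  frame : M → Fin n → VF
  g_symm : ∀ X Y, g X Y = g Y X
  g_add_left : ∀ X Y Z, g (X + Y) Z = g X Z + g Y Z
  g_smul_left : ∀ (r : ℝ) (X Y : VF), g (r • X) Y = r • g X Y
  g_fsmul_left : ∀ f X Y, g (fsmul f X) Y = f * g X Y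
  g_nonneg : ∀ X p, 0 ≤ g X X p
  fsmul_one : ∀ X, fsmul (fun _ => 1) X = X
  fsmul_add : ∀ f X Y, fsmul f (X + Y) = fsmul f X + fsmul f Y
  fsmul_add' : ∀ f₁ f₂ X, fsmul (f₁ + f₂) X = fsmul f₁ X + fsmul f₂ X
  dd_add : ∀ X f₁ f₂, dd X (f₁ + f₂) = dd X f₁ + dd X f₂
  dd_mul : ∀ X f₁ f₂, dd X (f₁ * f₂) = dd X f₁ * f₂ + f₁ * dd X f₂
  conn_add_left : ∀ X Y Z, conn (X + Y) Z = conn X Z + conn Y Z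
  conn_add_right : ∀ X Y Z, conn X (Y + Z) = conn X Y + conn X Z
  conn_fsmul_left : ∀ f X Y, conn (fsmul f X) Y = fsmul f (conn X Y)
  conn_leibniz : ∀ f X Y, conn X (fsmul f Y) = fsmul (dd X f) Y + fsmul f (conn X Y)
  conn_metric : ∀ X Y Z, dd X (g Y Z) = g (conn X Y) Z + g Y (conn X Z)
  torsion_free : ∀ X Y, conn X Y - conn Y X = bracket X Y
  frame_orthonormal : ∀ p i j, g (frame p i) (frame p j) p = if i = j then 1 else 0
  ric_trace : ∀ X Y p, ric X Y p = ∑ i : Fin n,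
      g (conn (frame p i) (conn X Y) - conn X (conn (frame p i) Y)
          - conn (bracket (frame p i) X) Y) (frame p i) p
  scal_trace : ∀ p, scal p = ∑ i : Fin n, ric (frame p i) (frame p i) p
  ric_symm : ∀ X Y, ric X Y = ric Y X

namespace RiemannianSetting

variable {n : ℕ} {M VF : Type} [AddCommGroup VF] [Module ℝ VF]

/-- The Lie derivative of the metric along `V`:
`(£_V g)(X,Y) = g(∇_X V, Y) + g(∇_Y V, X)`. -/
def lieg (G : RiemannianSetting n M VF) (V X Y : VF) : M → ℝ :=
  G.g (G.conn X V) Y + G.g (G.conn Y V) X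

/-- The `g`-dual `1`-form of a vector field `V`. -/
def dual (G : RiemannianSetting n M VF) (V X : VF) : M → ℝ := G.g V X

/-- The squared norm `|V|²` of a vector field. -/
def nsq (G : RiemannianSetting n M VF) (V : VF) : M → ℝ := G.g V V

/-- `X` is the gradient of `f`:  `g(X, Y) = Y(f)` for every vector field `Y`. -/
def IsGradient (G : RiemannianSetting n M VF) (f : M → ℝ) (X : VF) : Prop :=
  ∀ Y, G.g X Y = G.dd Y f

/-- A nowhere vanishing vector field. -/
def NowhereZero (G : RiemannianSetting n M VF) (V : VF) : Prop := ∀ p, G.g V V p ≠ 0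

/-- `(V, lam, mu)` is an almost `η`-Ricci soliton:
`(1/2) £_V g + Ric = λ g + μ η ⊗ η`. -/
def IsEtaRicciSoliton (G : RiemannianSetting n M VF) (V : VF) (lam mu : M → ℝ)
    (eta : VF → M → ℝ) : Prop :=
  ∀ X Y, (1 / 2 : ℝ) • G.lieg V X Y + G.ric X Y = lam * G.g X Y + mu * eta X * eta Y

/-- `(V, lam)` is an almost Ricci soliton: `(1/2) £_V g + Ric = λ g`. -/
def IsRicciSoliton (G : RiemannianSetting n M VF) (V : VF) (lam : M → ℝ) : Prop :=
  ∀ X Y, (1 / 2 : ℝ) • G.lieg V X Y + G.ric X Y = lam * G.g X Y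

/-- `(V, lam, mu)` is an almost `η`-Yamabe soliton:
`(1/2) £_V g = (scal − λ) g + μ η ⊗ η`. -/
def IsEtaYamabeSoliton (G : RiemannianSetting n M VF) (V : VF) (lam mu : M → ℝ)
    (eta : VF → M → ℝ) : Prop :=
  ∀ X Y, (1 / 2 : ℝ) • G.lieg V X Y = (G.scal - lam) * G.g X Y + mu * eta X * eta Y

/-- `V` is torse-forming: `∇_X V = a X + ψ(X) V` for every vector field `X`. -/
def IsTorseForming (G : RiemannianSetting n M VF) (V : VF) (a : M → ℝ)
    (psi : VF → M → ℝ) : Prop :=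
  ∀ X, G.conn X V = G.fsmul a X + G.fsmul (psi X) V

end RiemannianSetting

/-- Abstract data of a submanifold `M` isometrically immersed into a Riemannian
manifold `(M̃, g̃)`:  `VF` is the space of vector fields tangent to `M`, `W` is the
space of vector fields of `M̃` restricted along `M`, `gt` is the ambient metric,
`incl` the inclusion of tangent fields, `tang` the tangential projection, `Dconn`
the ambient Levi-Civita connection along tangent directions, and `sff` the second
fundamental form (the Gauss formula `∇̃_X Y = ∇_X Y + h(X,Y)` holds). -/
structure SubmanifoldSetting (n : ℕ) (M : Type) (VF W : Type)
    [AddCommGroup VF] [Module ℝ VF] [AddCommGroup W] [Module ℝ W] extends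
    RiemannianSetting n M VF where
  /-- the ambient metric along `M` -/
  gt : W → W → M → ℝ
  /-- multiplication of an ambient field by a function -/
  fsmulW : (M → ℝ) → W → W
  /-- inclusion of tangent vector fields into ambient vector fields -/
  incl : VF →ₗ[ℝ] W
  /-- tangential projection -/
  tang : W →ₗ[ℝ] VF
  /-- the ambient Levi-Civita connection along tangent directions of `M` -/
  Dconn : VF → W → W
  /-- the second fundamental form `h` -/
  sff : VF → VF → W
  gt_symm : ∀ v w, gt v w = gt w v
  gt_add_left : ∀ u v w, gt (u + v) w = gt u w + gt v w
  gt_fsmul_left : ∀ f v w, gt (fsmulW f v) w = f * gt v w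
  /-- the metric of `M` is induced by the ambient metric -/
  g_induced : ∀ X Y, g X Y = gt (incl X) (incl Y)
  tang_incl : ∀ X, tang (incl X) = X
  /-- the normal component `w − (tang w)` is `g̃`-orthogonal to `M` -/
  tang_proj : ∀ w X, gt (w - incl (tang w)) (incl X) = 0
  /-- the Gauss formula `∇̃_X Y = ∇_X Y + h(X, Y)` -/
  gauss : ∀ X Y, Dconn X (incl Y) = incl (conn X Y) + sff X Y
  sff_symm : ∀ X Y, sff X Y = sff Y X
  /-- the second fundamental form is normal-valued -/
  sff_normal : ∀ X Y Z, gt (sff X Y) (incl Z) = 0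
  Dconn_add : ∀ X v w, Dconn X (v + w) = Dconn X v + Dconn X w
  Dconn_metric : ∀ X v w, dd X (gt v w) = gt (Dconn X v) w + gt v (Dconn X w)

namespace SubmanifoldSetting

variable {n : ℕ} {M VF W : Type} [AddCommGroup VF] [Module ℝ VF]
  [AddCommGroup W] [Module ℝ W]

/-- the normal component `V^⊥` of an ambient vector field along `M` -/
def nor (S : SubmanifoldSetting n M VF W) (w : W) : W := w - S.incl (S.tang w)

end SubmanifoldSetting

/-- Abstract data of an `n`-dimensional hypersurface isometrically immersed into an
`(n+1)`-dimensional Riemannian manifold: a submanifold setting together with a unit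
normal vector field `nrm`, the associated shape operator `shape`, and the codimension
one condition (the second fundamental form is proportional to the normal). -/
structure HypersurfaceSetting (n : ℕ) (M : Type) (VF W : Type)
    [AddCommGroup VF] [Module ℝ VF] [AddCommGroup W] [Module ℝ W] extends
    SubmanifoldSetting n M VF W where
  /-- the unit normal vector field `N` of the hypersurface -/
  nrm : W
  /-- the shape operator `B` -/
  shape : VF → VF
  nrm_unit : ∀ p, gt nrm nrm p = 1
  nrm_normal : ∀ X, gt nrm (incl X) = 0
  /-- codimension one: `h(X,Y) = H(X,Y) N` -/
  sff_eq : ∀ X Y, sff X Y = fsmulW (gt (sff X Y) nrm) nrm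
  /-- `g(BX, Y) = H(X,Y)` -/
  shape_eq : ∀ X Y, g (shape X) Y = gt (sff X Y) nrm

namespace HypersurfaceSetting

variable {n : ℕ} {M VF W : Type} [AddCommGroup VF] [Module ℝ VF]
  [AddCommGroup W] [Module ℝ W]

/-- the second fundamental tensor field `H(X,Y) = g̃(h(X,Y), N)` -/
def H (S : HypersurfaceSetting n M VF W) (X Y : VF) : M → ℝ := S.gt (S.sff X Y) S.nrm

/-- `H²(X,Y) = g(BX, BY)` -/
def H2 (S : HypersurfaceSetting n M VF W) (X Y : VF) : M → ℝ :=
  S.g (S.shape X) (S.shape Y)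

/-- the trace `tr(H)` of the second fundamental tensor field -/
def trH (S : HypersurfaceSetting n M VF W) (p : M) : ℝ :=
  ∑ i : Fin n, S.H (S.frame p i) (S.frame p i) p

/-- the trace `tr(H²)` -/
def trH2 (S : HypersurfaceSetting n M VF W) (p : M) : ℝ :=
  ∑ i : Fin n, S.H2 (S.frame p i) (S.frame p i) p

/-- `ρ = g̃(N, V^⊥)` -/
def rho (S : HypersurfaceSetting n M VF W) (V : W) (p : M) : ℝ :=
  S.gt S.nrm (S.toSubmanifoldSetting.nor V) p

end HypersurfaceSetting

/-!
Split `V = V^T + V^⊥` along `M`. The Gauss formula for `V^T` and the Weingarten formula for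
`V^⊥` turn `∇̃_X V = a X` into `g(∇_X V^T, Y) = a g(X,Y) + ρ H(X,Y)`, so that
`£_{V^T} g = 2 (a g + ρ H)`. The soliton equation thus reads
`a g + ρ H + Ric = λ g + μ η ⊗ η`, and with `Ric = α g + β η ⊗ η` and `ρ ≠ 0` it can be
solved for `H`.
-/

namespace RiemannianSetting

variable {n : ℕ} {M VF : Type} [AddCommGroup VF] [Module ℝ VF]
  (G : RiemannianSetting n M VF)

theorem dd_zero (X : VF) : G.dd X 0 = 0 :=
  (AddMonoidHom.mk' (G.dd X) (G.dd_add X)).map_zero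

end RiemannianSetting

namespace SubmanifoldSetting

variable {n : ℕ} {M VF W : Type} [AddCommGroup VF] [Module ℝ VF]
  [AddCommGroup W] [Module ℝ W] (S : SubmanifoldSetting n M VF W)

def IsConcircular (V : W) (a : M → ℝ) : Prop :=
  ∀ X : VF, S.Dconn X V = S.fsmulW a (S.incl X)

theorem gt_add_right (u v w : W) : S.gt u (v + w) = S.gt u v + S.gt u w := by
  rw [S.gt_symm, S.gt_add_left, S.gt_symm v, S.gt_symm w]

theorem incl_tang_add_nor (w : W) : S.incl (S.tang w) + S.nor w = w :=
  add_sub_cancel _ _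

theorem gt_nor_incl (w : W) (X : VF) : S.gt (S.nor w) (S.incl X) = 0 :=
  S.tang_proj w X

/-- The Weingarten formula, tested against a tangent field. -/
theorem gt_Dconn_nor_incl (X Y : VF) (w : W) :
    S.gt (S.Dconn X (S.nor w)) (S.incl Y) = -S.gt (S.sff X Y) (S.nor w) := by
  have h := S.Dconn_metric X (S.nor w) (S.incl Y)
  rw [S.gt_nor_incl, S.dd_zero, S.gauss, S.gt_add_right, S.gt_nor_incl, zero_add,
    S.gt_symm (S.nor w)] at h
  linear_combination -h

theorem g_conn_tang (X Y : VF) (w : W) :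
    S.g (S.conn X (S.tang w)) Y =
      S.gt (S.Dconn X w) (S.incl Y) + S.gt (S.sff X Y) (S.nor w) := by
  have hsplit : S.gt (S.Dconn X w) (S.incl Y) =
      S.gt (S.Dconn X (S.incl (S.tang w))) (S.incl Y)
        + S.gt (S.Dconn X (S.nor w)) (S.incl Y) := by
    conv_lhs => rw [← S.incl_tang_add_nor w]
    rw [S.Dconn_add, S.gt_add_left]
  rw [hsplit, S.gt_Dconn_nor_incl, S.gauss, S.gt_add_left, S.sff_normal, S.g_induced]
  ring

theorem g_conn_tang_of_isConcircular {V : W} {a : M → ℝ} (hV : S.IsConcircular V a)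
    (X Y : VF) :
    S.g (S.conn X (S.tang V)) Y = a * S.g X Y + S.gt (S.sff X Y) (S.nor V) := by
  rw [g_conn_tang, hV, S.gt_fsmul_left, S.g_induced]

end SubmanifoldSetting

namespace HypersurfaceSetting

variable {n : ℕ} {M VF W : Type} [AddCommGroup VF] [Module ℝ VF]
  [AddCommGroup W] [Module ℝ W] (S : HypersurfaceSetting n M VF W)

theorem H_symm (X Y : VF) : S.H X Y = S.H Y X := by
  rw [H, H, S.sff_symm]

theorem gt_sff_nor (X Y : VF) (w : W) :
    S.gt (S.sff X Y) (S.toSubmanifoldSetting.nor w) = S.H X Y * S.rho w := by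
  rw [S.sff_eq, S.gt_fsmul_left]
  rfl

theorem g_conn_tang_of_isConcircular {V : W} {a : M → ℝ}
    (hV : S.IsConcircular V a) (X Y : VF) :
    S.g (S.conn X (S.tang V)) Y = a * S.g X Y + S.rho V * S.H X Y := by
  rw [S.toSubmanifoldSetting.g_conn_tang_of_isConcircular hV, gt_sff_nor, mul_comm (S.H X Y)]

theorem half_lieg_tang_of_isConcircular {V : W} {a : M → ℝ}
    (hV : S.IsConcircular V a) (X Y : VF) :
    (1 / 2 : ℝ) • S.lieg (S.tang V) X Y = a * S.g X Y + S.rho V * S.H X Y := by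
  rw [RiemannianSetting.lieg, S.g_conn_tang_of_isConcircular hV,
    S.g_conn_tang_of_isConcircular hV, S.g_symm Y, S.H_symm Y, ← two_smul ℝ, smul_smul]
  norm_num

theorem isEtaRicciSoliton_tang_iff {V : W} {a : M → ℝ} (hV : S.IsConcircular V a)
    (lam mu : M → ℝ) (eta : VF → M → ℝ) :
    S.IsEtaRicciSoliton (S.tang V) lam mu eta ↔
      ∀ X Y, a * S.g X Y + S.rho V * S.H X Y + S.ric X Y =
        lam * S.g X Y + mu * eta X * eta Y := by
  simp only [RiemannianSetting.IsEtaRicciSoliton, S.half_lieg_tang_of_isConcircular hV]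

end HypersurfaceSetting

theorem add_mul_add_eq_iff_eq_div {a g ρ h α β e₁ e₂ lam mu : ℝ} (hρ : ρ ≠ 0) :
    a * g + ρ * h + (α * g + β * e₁ * e₂) = lam * g + mu * e₁ * e₂ ↔
      h = (lam - a - α) / ρ * g + (mu - β) / ρ * e₁ * e₂ := by
  constructor
  · intro h'
    field_simp
    linear_combination h'
  · rintro rfl
    field_simp
    ring

/-- Let `M` be an `n`-dimensional quasi-Einstein hypersurface
isometrically immersed into an `(n+1)`-dimensional Riemannian manifold `(M̃, g̃)`,
whose Ricci tensor has the form `Ric = α g + β η ⊗ η`, let `V` be a concircular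
vector field on `M̃` (`∇̃_X V = a X`), let `η` be the `g`-dual `1`-form of the
tangential component `V^T`, and assume `ρ = g̃(N, V^⊥)` is nowhere zero, where `N`
is the unit normal of `M`.  Then `(M,g)` is an almost `η`-Ricci soliton
`(V^T, λ, μ)` if and only if `M` is a quasi-umbilical hypersurface whose second
fundamental tensor satisfies
`H = ((λ − a − α)/ρ) g + ((μ − β)/ρ) η ⊗ η`. -/
theorem quasi_einstein_hypersurface_soliton_iff_quasi_umbilical
    {n : ℕ} {M VF W : Type} [AddCommGroup VF] [Module ℝ VF]
    [AddCommGroup W] [Module ℝ W]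
    (S : HypersurfaceSetting n M VF W) (V : W) (lam mu a alpha beta : M → ℝ)
    (hconc : ∀ X : VF, S.Dconn X V = S.fsmulW a (S.incl X))
    (hric : ∀ X Y p, S.ric X Y p =
        alpha p * S.g X Y p
          + beta p * S.toRiemannianSetting.dual (S.tang V) X p
              * S.toRiemannianSetting.dual (S.tang V) Y p)
    (hrho : ∀ p, S.rho V p ≠ 0) :
    S.toRiemannianSetting.IsEtaRicciSoliton (S.tang V) lam mu
        (S.toRiemannianSetting.dual (S.tang V)) ↔
      ∀ X Y p, S.H X Y p =
        ((lam p - a p - alpha p) / S.rho V p) * S.g X Y p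
          + ((mu p - beta p) / S.rho V p)
              * S.toRiemannianSetting.dual (S.tang V) X p
              * S.toRiemannianSetting.dual (S.tang V) Y p := by
  rw [S.isEtaRicciSoliton_tang_iff hconc]
  refine forall₂_congr fun X Y => funext_iff.trans (forall_congr' fun p => ?_)
  simp only [Pi.add_apply, Pi.mul_apply, hric]
  exact add_mul_add_eq_iff_eq_div (hrho p)
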